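/- arXiv:1501.00423 — 2 statements merged into one kernel-verified Lean document; each statement's English description precedes it below -/
import Mathlib

section
/- Let Ω ⊂ ℝⁿ be a bounded connected open set whose signed distance function d is C² on a neighborhood of ∂Ω. Assume condition (reg22) (uniform continuity of b), condition (reg2) (β-Hölder continuity of σ with β ∈ (1/2,1]), condition (irrelevant), and that the operator F satisfies the Strong Maximum Principle in Ω (every upper semicontinuous viscosity subsolution of F[u]=0 attaining its maximum over Ω at an interior point is constant). If u : Ω → ℝ is upper semicontinuous, is a viscosity subsolution of F[u]=0 in Ω, and satisfies limsup_{x→∂Ω} u(x)/(−log d(x)) ≤ 0, then u is constant. -/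
open scoped InnerProductSpace Matrix
open Filter

noncomputable section

/-- The signed distance to the boundary of `Ω`:
`d(x) = dist(x, Ωᶜ) - dist(x, closure Ω)`. -/
def sdist {n : ℕ} (Ω : Set (EuclideanSpace ℝ (Fin n))) (x : EuclideanSpace ℝ (Fin n)) : ℝ :=
  Metric.infDist x Ωᶜ - Metric.infDist x (closure Ω)

/-- The distance to the topological boundary of `Ω`. -/
def bdist {n : ℕ} (Ω : Set (EuclideanSpace ℝ (Fin n))) (x : EuclideanSpace ℝ (Fin n)) : ℝ :=
  Metric.infDist x (frontier Ω)

/-- The Frobenius (Euclidean) norm of a matrix. -/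
def mnorm {n r : ℕ} (M : Matrix (Fin n) (Fin r) ℝ) : ℝ :=
  Real.sqrt (∑ i, ∑ j, M i j ^ 2)

/-- The quadratic form `v ↦ v ⬝ X v`. -/
def quadForm {n : ℕ} (X : Matrix (Fin n) (Fin n) ℝ) (v : EuclideanSpace ℝ (Fin n)) : ℝ :=
  ∑ i, ∑ j, X i j * v i * v j

/-- `Mᵀ v` as a vector in `ℝʳ` (used for `σ(x,α)ᵀ Dd(x)`). -/
def sigmaT {n r : ℕ} (M : Matrix (Fin n) (Fin r) ℝ) (v : EuclideanSpace ℝ (Fin n)) :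
    Fin r → ℝ :=
  Matrix.mulVec Mᵀ (fun i => v i)

/-- The second-order superjet of `u` at `x` relative to `S`. -/
def J2plus {n : ℕ} (S : Set (EuclideanSpace ℝ (Fin n))) (u : EuclideanSpace ℝ (Fin n) → ℝ)
    (x : EuclideanSpace ℝ (Fin n)) :
    Set (EuclideanSpace ℝ (Fin n) × Matrix (Fin n) (Fin n) ℝ) :=
  { pX | pX.2.IsSymm ∧ ∀ ε > (0 : ℝ), ∀ᶠ y in nhdsWithin x S,
      u y - u x - ⟪pX.1, y - x⟫_ℝ - (1 / 2) * quadForm pX.2 (y - x) ≤ ε * ‖y - x‖ ^ 2 }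

/-- The second-order subjet of `u` at `x` relative to `S`: `J^{2,-}u = -J^{2,+}(-u)`. -/
def J2minus {n : ℕ} (S : Set (EuclideanSpace ℝ (Fin n))) (u : EuclideanSpace ℝ (Fin n) → ℝ)
    (x : EuclideanSpace ℝ (Fin n)) :
    Set (EuclideanSpace ℝ (Fin n) × Matrix (Fin n) (Fin n) ℝ) :=
  { qZ | (-qZ.1, -qZ.2) ∈ J2plus S (fun y => -u y) x }

/-- The first-order superdifferential of `u` at `x` relative to `S`. -/
def D1plus {n : ℕ} (S : Set (EuclideanSpace ℝ (Fin n))) (u : EuclideanSpace ℝ (Fin n) → ℝ)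
    (x : EuclideanSpace ℝ (Fin n)) : Set (EuclideanSpace ℝ (Fin n)) :=
  { q | ∀ ε > (0 : ℝ), ∀ᶠ y in nhdsWithin x S, u y - u x - ⟪q, y - x⟫_ℝ ≤ ε * ‖y - x‖ }

/-- The Bellman operator `F(x,p,X) = sup_{α ∈ A} (-b(x,α)·p - tr(σσᵀ X))`. -/
def Fop {n m r : ℕ} (A : Set (Fin m → ℝ))
    (b : EuclideanSpace ℝ (Fin n) → (Fin m → ℝ) → EuclideanSpace ℝ (Fin n))
    (σ : EuclideanSpace ℝ (Fin n) → (Fin m → ℝ) → Matrix (Fin n) (Fin r) ℝ)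
    (x p : EuclideanSpace ℝ (Fin n)) (X : Matrix (Fin n) (Fin n) ℝ) : ℝ :=
  sSup ((fun α => -⟪b x α, p⟫_ℝ - Matrix.trace (σ x α * (σ x α)ᵀ * X)) '' A)

/-- The Hamiltonian `H(x,p,X) = sup_{α ∈ A} (-b(x,α)·p - tr(σσᵀ X) - l(x,α))`. -/
def Hop {n m r : ℕ} (A : Set (Fin m → ℝ))
    (b : EuclideanSpace ℝ (Fin n) → (Fin m → ℝ) → EuclideanSpace ℝ (Fin n))
    (σ : EuclideanSpace ℝ (Fin n) → (Fin m → ℝ) → Matrix (Fin n) (Fin r) ℝ)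
    (l : EuclideanSpace ℝ (Fin n) → (Fin m → ℝ) → ℝ)
    (x p : EuclideanSpace ℝ (Fin n)) (X : Matrix (Fin n) (Fin n) ℝ) : ℝ :=
  sSup ((fun α => -⟪b x α, p⟫_ℝ - Matrix.trace (σ x α * (σ x α)ᵀ * X) - l x α) '' A)

/-- The set of projections of `x` onto `∂Ω`. -/
def projSet {n : ℕ} (Ω : Set (EuclideanSpace ℝ (Fin n))) (x : EuclideanSpace ℝ (Fin n)) :
    Set (EuclideanSpace ℝ (Fin n)) :=
  { z | z ∈ frontier Ω ∧ dist x z = bdist Ω x }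

/-- The interior normal directions at a boundary point `z`. -/
def normalDirs {n : ℕ} (Ω : Set (EuclideanSpace ℝ (Fin n))) (z : EuclideanSpace ℝ (Fin n)) :
    Set (EuclideanSpace ℝ (Fin n)) :=
  { ν | ‖ν‖ = 1 ∧ ∃ x ∈ Ω, x = z + bdist Ω x • ν }

/-!
For `ε > 0` the function `u + ε log d` tends to `-∞` at `∂Ω` by the growth condition, so on a
thin layer `{d < t}` it is dominated by its values on `{d = t}` unless it has a local maximum
inside the layer. At such a maximum `x̂` the smooth function `-ε log d` touches `u` from above,
so its jet is a superjet of `u`; the subsolution inequality at the control `α₀` which the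
irrelevance condition provides at the nearest boundary point `z` reads
`⟪b, Dd⟫ + tr (a D²d) ≤ |σᵀ Dd|² / d`. As `Dd(x̂) = Dd(z)` and `σ(z, α₀)ᵀ Dd(z) = 0`, Hölder
continuity bounds the right side by `B² d^(2β-1)`, which is smaller than the lower bound `k d^γ`
for small `d`. Letting `ε → 0`, the supremum of `u` over `Ω` is attained on the compact set
`{d ≥ t}`, and the strong maximum principle makes `u` constant.
-/

open Metric Set Topology Asymptotics

section SignedDistance

variable {n : ℕ} {Ω : Set (EuclideanSpace ℝ (Fin n))} {x : EuclideanSpace ℝ (Fin n)}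

theorem continuous_sdist : Continuous (sdist Ω) :=
  (continuous_infDist_pt _).sub (continuous_infDist_pt _)

theorem sdist_eq_infDist_compl (hx : x ∈ closure Ω) : sdist Ω x = infDist x Ωᶜ := by
  simp [sdist, infDist_zero_of_mem hx]

theorem sdist_pos (hΩ : IsOpen Ω) (hc : Ωᶜ.Nonempty) (hx : x ∈ Ω) : 0 < sdist Ω x := by
  rw [sdist_eq_infDist_compl (subset_closure hx)]
  exact (hΩ.isClosed_compl.notMem_iff_infDist_pos hc).mp (not_not.mpr hx)

theorem mem_of_sdist_pos (h : 0 < sdist Ω x) : x ∈ Ω := by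
  by_contra hx
  have := infDist_nonneg (x := x) (s := closure Ω)
  simp only [sdist, infDist_zero_of_mem (s := Ωᶜ) hx] at h
  linarith

theorem isCompact_sdist_preimage (hΩ : Bornology.IsBounded Ω) {s : Set ℝ} (hs : IsClosed s)
    (hpos : s ⊆ Ioi 0) : IsCompact (sdist Ω ⁻¹' s) :=
  isCompact_of_isClosed_isBounded (hs.preimage continuous_sdist)
    (hΩ.subset fun _ hy => mem_of_sdist_pos (hpos hy))

theorem compl_nonempty_of_isBounded [Nontrivial (EuclideanSpace ℝ (Fin n))]
    (hΩ : Bornology.IsBounded Ω) : Ωᶜ.Nonempty := by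
  rw [nonempty_compl]
  rintro rfl
  exact NormedSpace.unbounded_univ ℝ _ hΩ

theorem exists_frontier_normal_segment (hΩ : IsOpen Ω) (hc : Ωᶜ.Nonempty) (hx : x ∈ Ω) :
    ∃ z ∈ frontier Ω, ∃ ν : EuclideanSpace ℝ (Fin n), ‖ν‖ = 1 ∧ x = z + sdist Ω x • ν ∧
      ∀ s ∈ Icc 0 (sdist Ω x), sdist Ω (z + s • ν) = s := by
  set D := sdist Ω x
  have hD : 0 < D := sdist_pos hΩ hc hx
  obtain ⟨z, hzc, hzx⟩ := hΩ.isClosed_compl.exists_infDist_eq_dist hc x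
  rw [← sdist_eq_infDist_compl (subset_closure hx)] at hzx
  set ν := D⁻¹ • (x - z)
  have hxz : x - z = D • ν := by simp [ν, smul_smul, hD.ne']
  have hν : ‖ν‖ = 1 := by
    rw [norm_smul, ← dist_eq_norm, ← hzx, Real.norm_of_nonneg (inv_nonneg.mpr hD.le),
      inv_mul_cancel₀ hD.ne']
  have hdist : ∀ s, dist x (z + s • ν) = |D - s| := fun s => by
    rw [dist_eq_norm, sub_add_eq_sub_sub, hxz, ← sub_smul, norm_smul, hν, mul_one,
      Real.norm_eq_abs]
  have hline : EqOn (fun s => sdist Ω (z + s • ν)) id (Ioc 0 D) := by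
    intro s ⟨hs0, hsD⟩
    have hge : s ≤ infDist (z + s • ν) Ωᶜ := by
      have := infDist_le_infDist_add_dist (x := x) (y := z + s • ν) (s := Ωᶜ)
      rw [← sdist_eq_infDist_compl (subset_closure hx), hdist, abs_of_nonneg (by linarith)] at this
      linarith
    have hle : infDist (z + s • ν) Ωᶜ ≤ s := by
      simpa [norm_smul, hν, abs_of_pos hs0] using infDist_le_dist_of_mem (x := z + s • ν) hzc
    have hmem : z + s • ν ∈ Ω :=
      not_not.mp fun h => (hs0.trans_le (hge.trans (infDist_zero_of_mem h).le)).false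
    change sdist Ω (z + s • ν) = s
    rw [sdist_eq_infDist_compl (subset_closure hmem)]
    exact hle.antisymm hge
  -- the endpoint `s = 0`, where `z + s • ν = z ∉ Ω`, follows by continuity
  have hsegment := hline.closure (continuous_sdist.comp (by fun_prop)) continuous_id
  rw [closure_Ioc hD.ne] at hsegment
  have hz0 : sdist Ω z = 0 := by simpa using hsegment (left_mem_Icc.mpr hD.le)
  have hzcl : z ∈ closure Ω := by
    rw [sdist, infDist_zero_of_mem hzc, zero_sub, neg_eq_zero,
      ← mem_closure_iff_infDist_zero ⟨x, subset_closure hx⟩, closure_closure] at hz0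
    exact hz0
  refine ⟨z, hΩ.frontier_eq ▸ ⟨hzcl, hzc⟩, ν, hν, by rw [← hxz, add_sub_cancel], hsegment⟩

end SignedDistance

section Calculus

variable {E : Type*} [NormedAddCommGroup E] [InnerProductSpace ℝ E] [CompleteSpace E]

theorem eq_of_hasGradientAt_of_eqOn_segment {f : E → ℝ} {g z ν : E} {D s : ℝ} (hD : 0 < D)
    (hs : s ∈ Icc 0 D) (hf : HasGradientAt f g (z + s • ν)) (hg : ‖g‖ = 1) (hν : ‖ν‖ = 1)
    (hline : ∀ t ∈ Icc 0 D, f (z + t • ν) = t) : g = ν := by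
  have hlineDeriv : HasDerivAt (fun t : ℝ => z + t • ν) ν s := by
    simpa using ((hasDerivAt_id s).smul_const ν).const_add z
  have hchain : HasDerivWithinAt (fun t => f (z + t • ν)) ⟪g, ν⟫_ℝ (Icc 0 D) s := by
    simpa [Function.comp_def, InnerProductSpace.toDual_apply_apply] using
      (hf.hasFDerivAt.comp_hasDerivAt s hlineDeriv).hasDerivWithinAt
  have hid : HasDerivWithinAt (fun t => f (z + t • ν)) 1 (Icc 0 D) s :=
    (hasDerivWithinAt_id s _).congr (fun t ht => hline t ht) (hline s hs)
  exact (inner_eq_one_iff_of_norm_eq_one hg hν).mp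
    ((uniqueDiffOn_Icc hD s hs).eq_deriv _ hchain hid)

theorem isLittleO_taylor_two {f : E → ℝ} {f' : E → E} {L : E →L[ℝ] E} {x : E}
    (hf : ∀ᶠ y in 𝓝 x, HasGradientAt f (f' y) y) (hf' : HasFDerivAt f' L x) :
    (fun y => f y - f x - ⟪f' x, y - x⟫_ℝ - (1 / 2) * ⟪L (y - x), y - x⟫_ℝ) =o[𝓝 x]
      fun y => ‖y - x‖ ^ 2 := by
  have hfF : ∀ᶠ y in 𝓝 x, HasFDerivAt f (innerSL ℝ (f' y)) y := hf
  have hsymm : ∀ v w, ⟪L v, w⟫_ℝ = ⟪L w, v⟫_ℝ :=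
    second_derivative_symmetric_of_eventually hfF ((innerSL ℝ).hasFDerivAt.comp x hf')
  refine IsLittleO.of_bound fun ε hε => ?_
  obtain ⟨ρ, hρ, hball⟩ := Metric.mem_nhds_iff.mp (hfF.and (hf'.isLittleO.def hε))
  rw [Metric.eventually_nhds_iff_ball]
  refine ⟨ρ, hρ, fun y hy => ?_⟩
  set R : E → ℝ := fun w => f w - f x - ⟪f' x, w - x⟫_ℝ - (1 / 2) * ⟪L (w - x), w - x⟫_ℝ
  -- by symmetry of `L`, the quadratic term has derivative `⟪L (w - x), ·⟫` at `w`
  have hR : ∀ w ∈ ball x ρ, HasFDerivAt R (innerSL ℝ (f' w - f' x - L (w - x))) w := by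
    intro w hw
    have hsub : HasFDerivAt (fun w : E => w - x) (ContinuousLinearMap.id ℝ E) w :=
      (hasFDerivAt_id w).sub_const x
    refine ((((hball hw).1.sub_const (f x)).sub ((innerSL ℝ (f' x)).hasFDerivAt.comp w hsub)).sub
      (((L.hasFDerivAt.comp w hsub).inner ℝ hsub).const_mul (1 / 2))).congr_fderiv ?_
    ext v
    simp only [ContinuousLinearMap.comp_id, one_div, Function.comp_apply, map_sub, sub_apply,
      coe_innerSL_apply, smul_apply, ContinuousLinearMap.comp_apply, ContinuousLinearMap.prod_apply,
      ContinuousLinearMap.id_apply, fderivInnerCLM_apply, inner_sub_left, hsymm v (w - x),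
      smul_eq_mul, sub_right_inj]
    ring
  have hcl : closedBall x ‖y - x‖ ⊆ ball x ρ :=
    closedBall_subset_ball (by rwa [← dist_eq_norm])
  have hmvt := (convex_closedBall x ‖y - x‖).norm_image_sub_le_of_norm_hasFDerivWithin_le
    (f := R) (fun w hw => (hR w (hcl hw)).hasFDerivWithinAt) (fun w hw => by
      rw [innerSL_apply_norm]
      exact (hball (hcl hw)).2.trans (mul_le_mul_of_nonneg_left
        (mem_closedBall_iff_norm.mp hw) hε.le))
    (mem_closedBall_self (norm_nonneg _)) (mem_closedBall_iff_norm.mpr le_rfl : y ∈ _)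
  simpa [R, pow_two, mul_assoc, abs_mul_abs_self] using hmvt

end Calculus

section MatrixAlgebra

variable {n r : ℕ}

theorem inner_eq_sum (v w : EuclideanSpace ℝ (Fin n)) : ⟪v, w⟫_ℝ = ∑ i, v i * w i := by
  simp [PiLp.inner_apply, mul_comm]

theorem quadForm_eq_inner (X : Matrix (Fin n) (Fin n) ℝ) (v : EuclideanSpace ℝ (Fin n)) :
    quadForm X v = ⟪Matrix.toEuclideanLin X v, v⟫_ℝ := by
  simp only [quadForm, inner_eq_sum, Matrix.toLpLin_apply, Matrix.mulVec, dotProduct,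
    Finset.sum_mul]
  exact Finset.sum_congr rfl fun i _ => Finset.sum_congr rfl fun j _ => by ring

theorem quadForm_add (X Y : Matrix (Fin n) (Fin n) ℝ) (v : EuclideanSpace ℝ (Fin n)) :
    quadForm (X + Y) v = quadForm X v + quadForm Y v := by
  simp only [quadForm, Matrix.add_apply, add_mul, Finset.sum_add_distrib]

theorem quadForm_sub (X Y : Matrix (Fin n) (Fin n) ℝ) (v : EuclideanSpace ℝ (Fin n)) :
    quadForm (X - Y) v = quadForm X v - quadForm Y v := by
  simp only [quadForm, Matrix.sub_apply, sub_mul, Finset.sum_sub_distrib]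

theorem quadForm_smul (a : ℝ) (X : Matrix (Fin n) (Fin n) ℝ) (v : EuclideanSpace ℝ (Fin n)) :
    quadForm (a • X) v = a * quadForm X v := by
  simp only [quadForm, Matrix.smul_apply, smul_eq_mul, Finset.mul_sum, mul_assoc]

theorem quadForm_transpose (X : Matrix (Fin n) (Fin n) ℝ) (v : EuclideanSpace ℝ (Fin n)) :
    quadForm Xᵀ v = quadForm X v := by
  rw [quadForm, Finset.sum_comm]
  simp only [quadForm, Matrix.transpose_apply, mul_right_comm]

theorem quadForm_outer (g v : EuclideanSpace ℝ (Fin n)) :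
    quadForm (Matrix.of fun i j => g i * g j) v = ⟪g, v⟫_ℝ ^ 2 := by
  simp only [quadForm, inner_eq_sum, sq, Finset.sum_mul_sum, Matrix.of_apply]
  exact Finset.sum_congr rfl fun i _ => Finset.sum_congr rfl fun j _ => by ring

theorem trace_mul_transpose_of_symm {S : Matrix (Fin n) (Fin n) ℝ} (hS : Sᵀ = S)
    (X : Matrix (Fin n) (Fin n) ℝ) : Matrix.trace (S * Xᵀ) = Matrix.trace (S * X) := by
  rw [← Matrix.trace_transpose, Matrix.transpose_mul, Matrix.transpose_transpose, hS,
    Matrix.trace_mul_comm]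

theorem trace_mul_outer (M : Matrix (Fin n) (Fin r) ℝ) (g : EuclideanSpace ℝ (Fin n)) :
    Matrix.trace (M * Mᵀ * Matrix.of fun i j => g i * g j) = ∑ k, sigmaT M g k ^ 2 := by
  simp only [Matrix.trace, Matrix.diag, Matrix.mul_apply, sigmaT, Matrix.mulVec, dotProduct,
    Matrix.transpose_apply, Matrix.of_apply, sq, Finset.sum_mul, Finset.mul_sum]
  calc ∑ i, ∑ j, ∑ k, M i k * M j k * (g j * g i)
      = ∑ i, ∑ k, ∑ j, M i k * M j k * (g j * g i) :=
        Finset.sum_congr rfl fun i _ => Finset.sum_comm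
    _ = ∑ k, ∑ i, ∑ j, M j k * g j * (M i k * g i) := by
        rw [Finset.sum_comm]
        exact Finset.sum_congr rfl fun k _ => Finset.sum_congr rfl fun i _ =>
          Finset.sum_congr rfl fun j _ => by ring

end MatrixAlgebra

section Bellman

variable {n m r : ℕ}

theorem abs_apply_le_mnorm (M : Matrix (Fin n) (Fin r) ℝ) (i : Fin n) (j : Fin r) :
    |M i j| ≤ mnorm M := by
  rw [mnorm, ← Real.sqrt_sq_eq_abs]
  refine Real.sqrt_le_sqrt ((Finset.single_le_sum (f := fun j' => M i j' ^ 2)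
    (fun _ _ => sq_nonneg _) (Finset.mem_univ j)).trans ?_)
  exact Finset.single_le_sum (f := fun i' => ∑ j', M i' j' ^ 2)
    (fun _ _ => Finset.sum_nonneg fun _ _ => sq_nonneg _) (Finset.mem_univ i)

theorem mnorm_sq (M : Matrix (Fin n) (Fin r) ℝ) : mnorm M ^ 2 = ∑ i, ∑ j, M i j ^ 2 :=
  Real.sq_sqrt (Finset.sum_nonneg fun _ _ => Finset.sum_nonneg fun _ _ => sq_nonneg _)

theorem sigmaT_sub (M N : Matrix (Fin n) (Fin r) ℝ) (v : EuclideanSpace ℝ (Fin n)) :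
    sigmaT (M - N) v = sigmaT M v - sigmaT N v := by
  simp [sigmaT, Matrix.transpose_sub, Matrix.sub_mulVec]

theorem sum_sigmaT_sq_le {M : Matrix (Fin n) (Fin r) ℝ} {v : EuclideanSpace ℝ (Fin n)}
    (hv : ‖v‖ = 1) : ∑ k, sigmaT M v k ^ 2 ≤ mnorm M ^ 2 := by
  have hv2 : ∑ i, v i ^ 2 = 1 := by
    simpa [EuclideanSpace.norm_eq, Real.sqrt_eq_one] using hv
  rw [mnorm_sq, Finset.sum_comm]
  refine Finset.sum_le_sum fun k _ => ?_
  calc sigmaT M v k ^ 2 = (∑ i, M i k * v i) ^ 2 := by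
        simp [sigmaT, Matrix.mulVec, dotProduct]
    _ ≤ (∑ i, M i k ^ 2) * ∑ i, v i ^ 2 := Finset.sum_mul_sq_le_sq_mul_sq _ _ _
    _ = ∑ i, M i k ^ 2 := by rw [hv2, mul_one]

theorem abs_trace_mul_le {P X : Matrix (Fin n) (Fin n) ℝ} {c : ℝ} (hP : ∀ i j, |P i j| ≤ c) :
    |Matrix.trace (P * X)| ≤ c * ∑ i, ∑ j, |X j i| := by
  simp only [Matrix.trace, Matrix.diag, Matrix.mul_apply, Finset.mul_sum]
  refine (Finset.abs_sum_le_sum_abs _ _).trans (Finset.sum_le_sum fun i _ =>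
    (Finset.abs_sum_le_sum_abs _ _).trans (Finset.sum_le_sum fun j _ => ?_))
  rw [abs_mul]
  exact mul_le_mul_of_nonneg_right (hP i j) (abs_nonneg _)

theorem abs_mul_transpose_apply_le {M : Matrix (Fin n) (Fin r) ℝ} {C : ℝ} (hM : mnorm M ≤ C)
    (i j : Fin n) : |(M * Mᵀ) i j| ≤ r * C ^ 2 := by
  rw [Matrix.mul_apply]
  refine (Finset.abs_sum_le_sum_abs _ _).trans ?_
  calc ∑ k, |M i k * Mᵀ k j| ≤ ∑ _k : Fin r, C ^ 2 := Finset.sum_le_sum fun k _ => by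
        rw [abs_mul, Matrix.transpose_apply, sq]
        exact mul_le_mul ((abs_apply_le_mnorm _ _ _).trans hM)
          ((abs_apply_le_mnorm _ _ _).trans hM) (abs_nonneg _) ((Real.sqrt_nonneg _).trans hM)
    _ = r * C ^ 2 := by simp

theorem le_Fop {A : Set (Fin m → ℝ)}
    {b : EuclideanSpace ℝ (Fin n) → (Fin m → ℝ) → EuclideanSpace ℝ (Fin n)}
    {σ : EuclideanSpace ℝ (Fin n) → (Fin m → ℝ) → Matrix (Fin n) (Fin r) ℝ}
    {x p : EuclideanSpace ℝ (Fin n)} (X : Matrix (Fin n) (Fin n) ℝ)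
    (hb : ∃ C, ∀ α ∈ A, ‖b x α‖ ≤ C) (hσ : ∃ C, ∀ α ∈ A, mnorm (σ x α) ≤ C)
    {α : Fin m → ℝ} (hα : α ∈ A) :
    -⟪b x α, p⟫_ℝ - Matrix.trace (σ x α * (σ x α)ᵀ * X) ≤ Fop A b σ x p X := by
  obtain ⟨Cb, hCb⟩ := hb
  obtain ⟨Cσ, hCσ⟩ := hσ
  refine le_csSup ⟨Cb * ‖p‖ + r * Cσ ^ 2 * ∑ i, ∑ j, |X j i|, ?_⟩ ⟨α, hα, rfl⟩
  rintro _ ⟨β, hβ, rfl⟩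
  have hdrift : -⟪b x β, p⟫_ℝ ≤ Cb * ‖p‖ :=
    (neg_le_abs _).trans ((abs_real_inner_le_norm _ _).trans
      (mul_le_mul_of_nonneg_right (hCb β hβ) (norm_nonneg _)))
  have hdiff := (neg_le_abs _).trans
    (abs_trace_mul_le (X := X) (abs_mul_transpose_apply_le (hCσ β hβ)))
  linarith

end Bellman

section Irrelevance

variable {n m r : ℕ}

theorem sum_sigmaT_sq_le_of_mnorm_sub_le {M N : Matrix (Fin n) (Fin r) ℝ}
    {v : EuclideanSpace ℝ (Fin n)} {c : ℝ} (hv : ‖v‖ = 1) (hN : sigmaT N v = 0)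
    (hMN : mnorm (M - N) ≤ c) : ∑ k, sigmaT M v k ^ 2 ≤ c ^ 2 := by
  have hM : sigmaT M v = sigmaT (M - N) v := by rw [sigmaT_sub, hN, sub_zero]
  rw [hM]
  exact (sum_sigmaT_sq_le hv).trans (pow_le_pow_left₀ (Real.sqrt_nonneg _) hMN 2)

/-- Below the threshold `(k / B²)^(1/(2β-1-γ))` the Hölder bound `B² D^(2β-1)` on the diffusion
in the normal direction is beaten by the drift bound `k D^γ` of the irrelevance condition. -/
theorem sq_mul_rpow_div_lt {k B β γ D : ℝ} (hD : 0 < D) (hB : 0 < B) (hk : 0 < k)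
    (hγ : γ < 2 * β - 1) (hsmall : D < (k / B ^ 2) ^ (2 * β - 1 - γ)⁻¹) :
    (B * D ^ β) ^ 2 / D < k * D ^ γ := by
  have hpow : D ^ (2 * β - 1 - γ) < k / B ^ 2 :=
    (Real.lt_rpow_inv_iff_of_pos hD.le (by positivity) (by linarith)).mp hsmall
  have hsq : (D ^ β) ^ 2 = D ^ (2 * β - 1 - γ) * D ^ γ * D := by
    rw [← Real.rpow_natCast, ← Real.rpow_mul hD.le, ← Real.rpow_add hD,
      ← Real.rpow_add_one hD.ne']
    congr 1
    push_cast
    ring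
  have hsplit : (B * D ^ β) ^ 2 / D = B ^ 2 * D ^ (2 * β - 1 - γ) * D ^ γ := by
    rw [mul_pow, hsq]
    field_simp
  rw [hsplit]
  gcongr
  rwa [lt_div_iff₀' (by positivity)] at hpow

end Irrelevance

section LogBarrier

variable {n m r : ℕ}

theorem mem_J2plus_of_eventually_sub_le {S : Set (EuclideanSpace ℝ (Fin n))}
    {u φ : EuclideanSpace ℝ (Fin n) → ℝ} {φ' : EuclideanSpace ℝ (Fin n) → EuclideanSpace ℝ (Fin n)}
    {L : EuclideanSpace ℝ (Fin n) →L[ℝ] EuclideanSpace ℝ (Fin n)}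
    {X : Matrix (Fin n) (Fin n) ℝ} {x : EuclideanSpace ℝ (Fin n)}
    (hmax : ∀ᶠ y in 𝓝[S] x, u y - u x ≤ φ y - φ x)
    (hφ : ∀ᶠ y in 𝓝 x, HasGradientAt φ (φ' y) y) (hφ' : HasFDerivAt φ' L x)
    (hX : X.IsSymm) (hXL : ∀ v, quadForm X v = ⟪L v, v⟫_ℝ) :
    (φ' x, X) ∈ J2plus S u x := by
  refine ⟨hX, fun ε hε => ?_⟩
  filter_upwards [hmax, nhdsWithin_le_nhds ((isLittleO_taylor_two hφ hφ').bound hε)]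
    with y hle htaylor
  rw [Real.norm_eq_abs, norm_pow, norm_norm] at htaylor
  rw [hXL]
  linarith [le_of_abs_le htaylor]

/-- The symmetrised Hessian of `c * log f` at a point where `f = t`, `∇f = g` and `D²f = H`. -/
def logHessian (c t : ℝ) (g : EuclideanSpace ℝ (Fin n)) (H : Matrix (Fin n) (Fin n) ℝ) :
    Matrix (Fin n) (Fin n) ℝ :=
  (c * t⁻¹) • ((1 / 2 : ℝ) • (H + Hᵀ)) - (c * (t ^ 2)⁻¹) • Matrix.of fun i j => g i * g j

theorem logHessian_isSymm (c t : ℝ) (g : EuclideanSpace ℝ (Fin n))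
    (H : Matrix (Fin n) (Fin n) ℝ) : (logHessian c t g H).IsSymm := by
  ext i j
  simp only [logHessian, Matrix.transpose_apply, Matrix.sub_apply, Matrix.smul_apply,
    Matrix.add_apply, Matrix.of_apply, smul_eq_mul]
  ring

theorem mem_J2plus_of_eventually_le_mul_log {S : Set (EuclideanSpace ℝ (Fin n))}
    {u f : EuclideanSpace ℝ (Fin n) → ℝ} {f' : EuclideanSpace ℝ (Fin n) → EuclideanSpace ℝ (Fin n)}
    {H : Matrix (Fin n) (Fin n) ℝ} {x : EuclideanSpace ℝ (Fin n)} (c : ℝ)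
    (hf : ∀ᶠ y in 𝓝 x, HasGradientAt f (f' y) y)
    (hf' : HasFDerivAt f' (Matrix.toEuclideanLin H).toContinuousLinearMap x) (hx : 0 < f x)
    (hmax : ∀ᶠ y in 𝓝[S] x, u y - u x ≤ c * Real.log (f y) - c * Real.log (f x)) :
    ((c * (f x)⁻¹) • f' x, logHessian c (f x) (f' x) H) ∈ J2plus S u x := by
  have hpos : ∀ᶠ y in 𝓝 x, 0 < f y :=
    hf.self_of_nhds.hasFDerivAt.continuousAt.eventually (lt_mem_nhds hx)
  have hgrad : ∀ᶠ y in 𝓝 x,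
      HasGradientAt (fun y => c * Real.log (f y)) ((c * (f y)⁻¹) • f' y) y := by
    filter_upwards [hf, hpos] with y hy hy0
    rw [hasGradientAt_iff_hasFDerivAt, map_smul, mul_smul]
    exact (hy.hasFDerivAt.log hy0.ne').const_mul c
  have hinv : HasFDerivAt (fun y => c * (f y)⁻¹)
      (c • (-((f x) ^ 2)⁻¹) • (InnerProductSpace.toDual ℝ _ (f' x))) x :=
    ((hasDerivAt_inv hx.ne').comp_hasFDerivAt x hf.self_of_nhds.hasFDerivAt).const_mul c
  set L := (c * (f x)⁻¹) • (Matrix.toEuclideanLin H).toContinuousLinearMap +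
    (c • (-((f x) ^ 2)⁻¹) • (InnerProductSpace.toDual ℝ _ (f' x))).smulRight (f' x)
  have hjet : HasFDerivAt (fun y => (c * (f y)⁻¹) • f' y) L x := hinv.smul hf'
  have hquad : ∀ v, quadForm (logHessian c (f x) (f' x) H) v = ⟪L v, v⟫_ℝ := fun v => by
    rw [logHessian, quadForm_sub, quadForm_smul, quadForm_smul, quadForm_smul, quadForm_add,
      quadForm_transpose, quadForm_outer, quadForm_eq_inner]
    simp only [L, add_apply, smul_apply, LinearMap.coe_toContinuousLinearMap',
      ContinuousLinearMap.smulRight_apply, InnerProductSpace.toDual_apply_apply, smul_eq_mul,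
      inner_add_left, real_inner_smul_left]
    ring
  exact mem_J2plus_of_eventually_sub_le (φ' := fun y => (c * (f y)⁻¹) • f' y) hmax hgrad hjet
    (logHessian_isSymm _ _ _ _) hquad

theorem inner_add_trace_le_of_isLocalMaxOn_add_mul_log {A : Set (Fin m → ℝ)}
    {b : EuclideanSpace ℝ (Fin n) → (Fin m → ℝ) → EuclideanSpace ℝ (Fin n)}
    {σ : EuclideanSpace ℝ (Fin n) → (Fin m → ℝ) → Matrix (Fin n) (Fin r) ℝ}
    {S : Set (EuclideanSpace ℝ (Fin n))} {u f : EuclideanSpace ℝ (Fin n) → ℝ}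
    {f' : EuclideanSpace ℝ (Fin n) → EuclideanSpace ℝ (Fin n)} {H : Matrix (Fin n) (Fin n) ℝ}
    {x : EuclideanSpace ℝ (Fin n)} {ε : ℝ}
    (husub : ∀ pX ∈ J2plus S u x, Fop A b σ x pX.1 pX.2 ≤ 0)
    (hb : ∃ C, ∀ α ∈ A, ‖b x α‖ ≤ C) (hσ : ∃ C, ∀ α ∈ A, mnorm (σ x α) ≤ C)
    (hf : ∀ᶠ y in 𝓝 x, HasGradientAt f (f' y) y)
    (hf' : HasFDerivAt f' (Matrix.toEuclideanLin H).toContinuousLinearMap x) (hx : 0 < f x)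
    (hε : 0 < ε) (hmax : IsLocalMaxOn (fun y => u y + ε * Real.log (f y)) S x)
    {α : Fin m → ℝ} (hα : α ∈ A) :
    ⟪b x α, f' x⟫_ℝ + Matrix.trace (σ x α * (σ x α)ᵀ * H) ≤
      (∑ k, sigmaT (σ x α) (f' x) k ^ 2) / f x := by
  have hjet := mem_J2plus_of_eventually_le_mul_log (S := S) (u := u) (-ε) hf hf' hx (by
    filter_upwards [hmax] with y hy
    linarith)
  have hval := (le_Fop _ hb hσ hα).trans (husub _ hjet)
  set a := σ x α * (σ x α)ᵀ
  have ha : aᵀ = a := by rw [Matrix.transpose_mul, Matrix.transpose_transpose]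
  rw [real_inner_smul_right, logHessian, Matrix.mul_sub, Matrix.trace_sub, Matrix.mul_smul,
    Matrix.mul_smul, Matrix.mul_smul, Matrix.mul_add, Matrix.trace_smul, Matrix.trace_smul,
    Matrix.trace_smul, Matrix.trace_add, trace_mul_transpose_of_symm ha, trace_mul_outer] at hval
  have hscaled : ε * (f x)⁻¹ * (⟪b x α, f' x⟫_ℝ + Matrix.trace (a * H) -
      (∑ k, sigmaT (σ x α) (f' x) k ^ 2) / f x) ≤ 0 := by
    simp only [smul_eq_mul] at hval
    rw [div_eq_mul_inv]
    linear_combination hval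
  have := nonpos_of_mul_nonpos_right hscaled (by positivity)
  linarith

theorem not_isLocalMaxOn_add_mul_log_sdist {Ω : Set (EuclideanSpace ℝ (Fin n))}
    {A : Set (Fin m → ℝ)} {b : EuclideanSpace ℝ (Fin n) → (Fin m → ℝ) → EuclideanSpace ℝ (Fin n)}
    {σ : EuclideanSpace ℝ (Fin n) → (Fin m → ℝ) → Matrix (Fin n) (Fin r) ℝ}
    {δ₀ δ k γ β B ε : ℝ} {Dd : EuclideanSpace ℝ (Fin n) → EuclideanSpace ℝ (Fin n)}
    {D2d : EuclideanSpace ℝ (Fin n) → Matrix (Fin n) (Fin n) ℝ}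
    {u : EuclideanSpace ℝ (Fin n) → ℝ} {x : EuclideanSpace ℝ (Fin n)}
    (hΩ : IsOpen Ω) (hc : Ωᶜ.Nonempty)
    (hDd : ∀ x, |sdist Ω x| < δ₀ → HasGradientAt (sdist Ω) (Dd x) x)
    (hDdnorm : ∀ x, |sdist Ω x| < δ₀ → ‖Dd x‖ = 1)
    (hD2d : ∀ x, |sdist Ω x| < δ₀ →
      HasFDerivAt Dd (LinearMap.toContinuousLinearMap (Matrix.toEuclideanLin (D2d x))) x)
    (hbBdd : ∃ C, ∀ x ∈ closure Ω, ∀ α ∈ A, ‖b x α‖ ≤ C)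
    (hσBdd : ∃ C, ∀ x ∈ closure Ω, ∀ α ∈ A, mnorm (σ x α) ≤ C)
    (hreg2 : ∀ x ∈ closure Ω, ∀ y ∈ closure Ω, ∀ α ∈ A,
      mnorm (σ x α - σ y α) ≤ B * ‖x - y‖ ^ β)
    (hB : 0 < B) (hk : 0 < k) (hγ : γ < 2 * β - 1)
    (hirr : ∀ z ∈ frontier Ω, ∃ α₀ ∈ A, sigmaT (σ z α₀) (Dd z) = 0 ∧
      ∀ x ∈ Ω ∩ Metric.ball z δ,
        k * sdist Ω x ^ γ ≤ ⟪b x α₀, Dd x⟫_ℝ + Matrix.trace (σ x α₀ * (σ x α₀)ᵀ * D2d x))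
    (husub : ∀ x ∈ Ω, ∀ pX ∈ J2plus Ω u x, Fop A b σ x pX.1 pX.2 ≤ 0)
    (hε : 0 < ε) (hx : x ∈ Ω) (hxδ₀ : sdist Ω x < δ₀) (hxδ : sdist Ω x < δ)
    (hxk : sdist Ω x < (k / B ^ 2) ^ (2 * β - 1 - γ)⁻¹) :
    ¬ IsLocalMaxOn (fun y => u y + ε * Real.log (sdist Ω y)) Ω x := by
  intro hmax
  set D := sdist Ω x
  have hD : 0 < D := sdist_pos hΩ hc hx
  obtain ⟨z, hz, ν, hν, hxz, hsegment⟩ := exists_frontier_normal_segment hΩ hc hx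
  have hnear : ∀ s ∈ Icc 0 D, |sdist Ω (z + s • ν)| < δ₀ := fun s hs => by
    rw [hsegment s hs, abs_of_nonneg hs.1]
    exact hs.2.trans_lt hxδ₀
  have hnormal : ∀ s ∈ Icc 0 D, Dd (z + s • ν) = ν := fun s hs =>
    eq_of_hasGradientAt_of_eqOn_segment hD hs (hDd _ (hnear s hs)) (hDdnorm _ (hnear s hs)) hν
      hsegment
  have hDdz : Dd z = ν := by simpa using hnormal 0 (left_mem_Icc.2 hD.le)
  have hxnear : |sdist Ω x| < δ₀ := by
    rw [hxz]
    exact hnear D (right_mem_Icc.2 hD.le)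
  have hDdx : Dd x = ν := by
    rw [hxz]
    exact hnormal D (right_mem_Icc.2 hD.le)
  have hxzdist : ‖x - z‖ = D := by rw [hxz, add_sub_cancel_left, norm_smul, hν, mul_one,
    Real.norm_of_nonneg hD.le]
  obtain ⟨α, hα, hσz, hdrift⟩ := hirr z hz
  have hlower := hdrift x ⟨hx, by rwa [mem_ball, dist_eq_norm, hxzdist]⟩
  have hgrad : ∀ᶠ y in 𝓝 x, HasGradientAt (sdist Ω) (Dd y) y := by
    filter_upwards [(isOpen_lt (continuous_abs.comp continuous_sdist) continuous_const).mem_nhds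
      hxnear] with y hy using hDd y hy
  have hupper := inner_add_trace_le_of_isLocalMaxOn_add_mul_log (husub x hx)
    (hbBdd.imp fun C hC => hC x (subset_closure hx))
    (hσBdd.imp fun C hC => hC x (subset_closure hx)) hgrad (hD2d x hxnear) hD hε hmax hα
  have hholder : ∑ k, sigmaT (σ x α) ν k ^ 2 ≤ (B * D ^ β) ^ 2 :=
    sum_sigmaT_sq_le_of_mnorm_sub_le hν (hDdz ▸ hσz) (hxzdist ▸
      hreg2 x (subset_closure hx) z (frontier_subset_closure hz) α hα)
  rw [hDdx] at hupper hlower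
  have := div_le_div_of_nonneg_right hholder hD.le
  linarith [sq_mul_rpow_div_lt hD hB hk hγ hxk]

end LogBarrier

section Localization

variable {n : ℕ} {Ω : Set (EuclideanSpace ℝ (Fin n))}

theorem le_of_forall_pos_le_add_mul {a b c : ℝ} (h : ∀ ε > 0, a ≤ b + ε * c) : a ≤ b := by
  have hcont : Continuous fun ε : ℝ => b + ε * c := by fun_prop
  have hlim : Tendsto (fun ε => b + ε * c) (𝓝[>] 0) (𝓝 b) := by
    simpa using (hcont.tendsto 0).mono_left nhdsWithin_le_nhds
  exact ge_of_tendsto hlim (eventually_nhdsWithin_of_forall h)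

theorem exists_sdist_eq_le_of_forall_not_isLocalMaxOn {w : EuclideanSpace ℝ (Fin n) → ℝ}
    {t : ℝ} {p : EuclideanSpace ℝ (Fin n)} (hΩ : IsOpen Ω) (hc : Ωᶜ.Nonempty)
    (hbdd : Bornology.IsBounded Ω) (hw : UpperSemicontinuousOn w Ω)
    (hno : ∀ x ∈ Ω, sdist Ω x < t → ¬ IsLocalMaxOn w Ω x)
    (hsmall : ∃ η > 0, ∀ y ∈ Ω, sdist Ω y < η → w y < w p) (hp : p ∈ Ω) (hpt : sdist Ω p ≤ t) :
    ∃ x ∈ Ω, sdist Ω x = t ∧ w p ≤ w x := by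
  obtain ⟨η, hη, hηp⟩ := hsmall
  set η' := min η (sdist Ω p)
  have hη' : 0 < η' := lt_min hη (sdist_pos hΩ hc hp)
  have hKΩ : sdist Ω ⁻¹' Icc η' t ⊆ Ω := fun y hy => mem_of_sdist_pos (hη'.trans_le hy.1)
  have hpK : p ∈ sdist Ω ⁻¹' Icc η' t := ⟨min_le_right _ _, hpt⟩
  obtain ⟨x, hxK, hxmax⟩ := (hw.mono hKΩ).exists_isMaxOn ⟨p, hpK⟩
    (isCompact_sdist_preimage hbdd isClosed_Icc fun _ hy => hη'.trans_le hy.1)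
  have hpx : w p ≤ w x := hxmax hpK
  refine ⟨x, hKΩ hxK, hxK.2.eq_or_lt.resolve_right fun hxt => hno x (hKΩ hxK) hxt ?_, hpx⟩
  filter_upwards [nhdsWithin_le_nhds ((isOpen_lt continuous_sdist continuous_const).mem_nhds hxt),
    self_mem_nhdsWithin] with y hyt hyΩ
  rcases le_or_gt η' (sdist Ω y) with hyη | hyη
  · exact hxmax ⟨hyη, hyt.le⟩
  · exact ((hηp y hyΩ (hyη.trans_le (min_le_left _ _))).trans_le hpx).le

theorem exists_forall_sdist_lt_add_mul_log_lt (hΩ : IsOpen Ω) (hc : Ωᶜ.Nonempty)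
    {u : EuclideanSpace ℝ (Fin n) → ℝ}
    (hgrowth : ∀ ε > (0 : ℝ), ∃ δ > 0, ∀ x ∈ Ω, sdist Ω x < δ → u x ≤ ε * (-Real.log (sdist Ω x)))
    {ε : ℝ} (hε : 0 < ε) (c : ℝ) :
    ∃ η > 0, ∀ y ∈ Ω, sdist Ω y < η → u y + ε * Real.log (sdist Ω y) < c := by
  obtain ⟨δ, hδ, hδu⟩ := hgrowth (ε / 2) (half_pos hε)
  refine ⟨min δ (Real.exp (2 * c / ε)), lt_min hδ (Real.exp_pos _), fun y hy hyη => ?_⟩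
  have hlog : Real.log (sdist Ω y) < 2 * c / ε := by
    rw [Real.log_lt_iff_lt_exp (sdist_pos hΩ hc hy)]
    exact hyη.trans_le (min_le_right _ _)
  have hu := hδu y hy (hyη.trans_le (min_le_left _ _))
  have : ε / 2 * Real.log (sdist Ω y) < c :=
    calc ε / 2 * Real.log (sdist Ω y) < ε / 2 * (2 * c / ε) :=
          mul_lt_mul_of_pos_left hlog (half_pos hε)
      _ = c := by field_simp
  linarith

theorem exists_forall_le_of_forall_not_isLocalMaxOn (hΩ : IsOpen Ω) (hc : Ωᶜ.Nonempty)
    (hbdd : Bornology.IsBounded Ω) (hne : Ω.Nonempty) {u : EuclideanSpace ℝ (Fin n) → ℝ}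
    (hu : UpperSemicontinuousOn u Ω)
    (hgrowth : ∀ ε > (0 : ℝ), ∃ δ > 0, ∀ x ∈ Ω, sdist Ω x < δ → u x ≤ ε * (-Real.log (sdist Ω x)))
    {t : ℝ} (ht : 0 < t)
    (hno : ∀ ε > (0 : ℝ), ∀ x ∈ Ω, sdist Ω x < t →
      ¬ IsLocalMaxOn (fun y => u y + ε * Real.log (sdist Ω y)) Ω x) :
    ∃ x₀ ∈ Ω, ∀ x ∈ Ω, u x ≤ u x₀ := by
  have hlayer : ∀ ε > (0 : ℝ), ∀ p ∈ Ω, sdist Ω p ≤ t → ∃ x ∈ Ω, sdist Ω x = t ∧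
      u p + ε * Real.log (sdist Ω p) ≤ u x + ε * Real.log t := fun ε hε p hp hpt => by
    obtain ⟨x, hx, hxt, hpx⟩ := exists_sdist_eq_le_of_forall_not_isLocalMaxOn hΩ hc hbdd
      (hu.add ((continuousOn_const.mul ((Real.continuousOn_log.comp continuous_sdist.continuousOn
        fun y hy => (sdist_pos hΩ hc hy).ne')))).upperSemicontinuousOn)
      (hno ε hε) (exists_forall_sdist_lt_add_mul_log_lt hΩ hc hgrowth hε _) hp hpt
    exact ⟨x, hx, hxt, hxt ▸ hpx⟩
  have hKΩ : sdist Ω ⁻¹' Ici t ⊆ Ω := fun y hy => mem_of_sdist_pos (ht.trans_le hy)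
  have hKne : (sdist Ω ⁻¹' Ici t).Nonempty := by
    obtain ⟨p, hp⟩ := hne
    rcases le_total t (sdist Ω p) with hpt | hpt
    · exact ⟨p, hpt⟩
    · obtain ⟨x, -, hxt, -⟩ := hlayer 1 one_pos p hp hpt
      exact ⟨x, hxt.ge⟩
  obtain ⟨x₀, hx₀, hmax⟩ := (hu.mono hKΩ).exists_isMaxOn hKne
    (isCompact_sdist_preimage hbdd isClosed_Ici fun _ hy => ht.trans_le hy)
  refine ⟨x₀, hKΩ hx₀, fun p hp => ?_⟩
  rcases le_total t (sdist Ω p) with hpt | hpt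
  · exact hmax hpt
  refine le_of_forall_pos_le_add_mul (c := Real.log t - Real.log (sdist Ω p)) fun ε hε => ?_
  obtain ⟨x, -, hxt, hpx⟩ := hlayer ε hε p hp hpt
  have : u x ≤ u x₀ := hmax hxt.ge
  linarith

end Localization

theorem statement_0_general
    {n m r : ℕ} (Ω : Set (EuclideanSpace ℝ (Fin n)))
    (hΩo : IsOpen Ω) (hΩbdd : Bornology.IsBounded Ω)
    (A : Set (Fin m → ℝ))
    (b : EuclideanSpace ℝ (Fin n) → (Fin m → ℝ) → EuclideanSpace ℝ (Fin n))
    (σ : EuclideanSpace ℝ (Fin n) → (Fin m → ℝ) → Matrix (Fin n) (Fin r) ℝ)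
    (hbBdd : ∃ C, ∀ x ∈ closure Ω, ∀ α ∈ A, ‖b x α‖ ≤ C)
    (hσBdd : ∃ C, ∀ x ∈ closure Ω, ∀ α ∈ A, mnorm (σ x α) ≤ C)
    (δ₀ : ℝ) (hδ₀ : 0 < δ₀)
    (Dd : EuclideanSpace ℝ (Fin n) → EuclideanSpace ℝ (Fin n))
    (D2d : EuclideanSpace ℝ (Fin n) → Matrix (Fin n) (Fin n) ℝ)
    (hDd : ∀ x, |sdist Ω x| < δ₀ → HasGradientAt (sdist Ω) (Dd x) x)
    (hDdnorm : ∀ x, |sdist Ω x| < δ₀ → ‖Dd x‖ = 1)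
    (hD2d : ∀ x, |sdist Ω x| < δ₀ →
      HasFDerivAt Dd (LinearMap.toContinuousLinearMap (Matrix.toEuclideanLin (D2d x))) x)
    (β B : ℝ) (hB : 0 < B)
    (hreg2 : ∀ x ∈ closure Ω, ∀ y ∈ closure Ω, ∀ α ∈ A,
      mnorm (σ x α - σ y α) ≤ B * ‖x - y‖ ^ β)
    (hirr : ∃ δ > (0 : ℝ), ∃ k > (0 : ℝ), ∃ γ : ℝ, γ < 2 * β - 1 ∧
      ∀ z ∈ frontier Ω, ∃ α₀ ∈ A, sigmaT (σ z α₀) (Dd z) = 0 ∧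
        ∀ x ∈ Ω ∩ Metric.ball z δ,
          k * sdist Ω x ^ γ ≤
            ⟪b x α₀, Dd x⟫_ℝ + Matrix.trace (σ x α₀ * (σ x α₀)ᵀ * D2d x))
    (hSMP : ∀ w : EuclideanSpace ℝ (Fin n) → ℝ, UpperSemicontinuousOn w Ω →
      (∀ x ∈ Ω, ∀ pX ∈ J2plus Ω w x, Fop A b σ x pX.1 pX.2 ≤ 0) →
      (∃ x₀ ∈ Ω, ∀ x ∈ Ω, w x ≤ w x₀) → ∀ x ∈ Ω, ∀ y ∈ Ω, w x = w y)
    (u : EuclideanSpace ℝ (Fin n) → ℝ) (hu : UpperSemicontinuousOn u Ω)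
    (husub : ∀ x ∈ Ω, ∀ pX ∈ J2plus Ω u x, Fop A b σ x pX.1 pX.2 ≤ 0)
    (hgrowth : ∀ ε > (0 : ℝ), ∃ δ, 0 < δ ∧ δ < 1 ∧
      ∀ x ∈ Ω, sdist Ω x < δ → u x ≤ ε * (-Real.log (sdist Ω x))) :
    ∀ x ∈ Ω, ∀ y ∈ Ω, u x = u y := by
  intro x hx y hy
  rcases subsingleton_or_nontrivial (EuclideanSpace ℝ (Fin n)) with _ | _
  · exact congrArg u (Subsingleton.elim x y)
  have hc : Ωᶜ.Nonempty := compl_nonempty_of_isBounded hΩbdd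
  obtain ⟨δ, hδ, k, hk, γ, hγ, hirr⟩ := hirr
  set t := min (min δ₀ δ) ((k / B ^ 2) ^ (2 * β - 1 - γ)⁻¹)
  have ht : 0 < t := by positivity
  have hno : ∀ ε > (0 : ℝ), ∀ x ∈ Ω, sdist Ω x < t →
      ¬ IsLocalMaxOn (fun y => u y + ε * Real.log (sdist Ω y)) Ω x := fun ε hε x hx hxt =>
    not_isLocalMaxOn_add_mul_log_sdist hΩo hc hDd hDdnorm hD2d hbBdd hσBdd hreg2 hB hk hγ hirr
      husub hε hx (hxt.trans_le ((min_le_left _ _).trans (min_le_left _ _)))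
      (hxt.trans_le ((min_le_left _ _).trans (min_le_right _ _))) (hxt.trans_le (min_le_right _ _))
  obtain ⟨x₀, hx₀, hmax⟩ :=
    exists_forall_le_of_forall_not_isLocalMaxOn hΩo hc hΩbdd ⟨x, hx⟩ hu
      (fun ε hε => (hgrowth ε hε).imp fun _ h => ⟨h.1, h.2.2⟩) ht hno
  exact hSMP u hu husub ⟨x₀, hx₀, hmax⟩ x hx y hy

theorem statement_0
    {n m r : ℕ} (Ω : Set (EuclideanSpace ℝ (Fin n)))
    (hΩo : IsOpen Ω) (hΩconn : IsConnected Ω) (hΩbdd : Bornology.IsBounded Ω)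
    (A : Set (Fin m → ℝ)) (hA : IsClosed A) (hAne : A.Nonempty)
    (b : EuclideanSpace ℝ (Fin n) → (Fin m → ℝ) → EuclideanSpace ℝ (Fin n))
    (σ : EuclideanSpace ℝ (Fin n) → (Fin m → ℝ) → Matrix (Fin n) (Fin r) ℝ)
    (hbBdd : ∃ C, ∀ x ∈ closure Ω, ∀ α ∈ A, ‖b x α‖ ≤ C)
    (hσBdd : ∃ C, ∀ x ∈ closure Ω, ∀ α ∈ A, mnorm (σ x α) ≤ C)
    (hbCont : ContinuousOn (fun q : EuclideanSpace ℝ (Fin n) × (Fin m → ℝ) => b q.1 q.2)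
      (closure Ω ×ˢ A))
    (hσCont : ContinuousOn (fun q : EuclideanSpace ℝ (Fin n) × (Fin m → ℝ) => σ q.1 q.2)
      (closure Ω ×ˢ A))
    (δ₀ : ℝ) (hδ₀ : 0 < δ₀)
    (Dd : EuclideanSpace ℝ (Fin n) → EuclideanSpace ℝ (Fin n))
    (D2d : EuclideanSpace ℝ (Fin n) → Matrix (Fin n) (Fin n) ℝ)
    (hDd : ∀ x, |sdist Ω x| < δ₀ → HasGradientAt (sdist Ω) (Dd x) x)
    (hDdnorm : ∀ x, |sdist Ω x| < δ₀ → ‖Dd x‖ = 1)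
    (hD2d : ∀ x, |sdist Ω x| < δ₀ →
      HasFDerivAt Dd (LinearMap.toContinuousLinearMap (Matrix.toEuclideanLin (D2d x))) x)
    (hD2dCont : ContinuousOn D2d {x | |sdist Ω x| < δ₀})
    (ω : ℝ → ℝ) (hω0 : ω 0 = 0) (hωcont : ContinuousAt ω 0) (hωnn : ∀ s, 0 ≤ ω s)
    (hreg22 : ∀ x ∈ closure Ω, ∀ y ∈ closure Ω, ∀ α ∈ A, ‖b x α - b y α‖ ≤ ω ‖x - y‖)
    (β B : ℝ) (hβlow : 1 / 2 < β) (hβhigh : β ≤ 1) (hB : 0 < B)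
    (hreg2 : ∀ x ∈ closure Ω, ∀ y ∈ closure Ω, ∀ α ∈ A,
      mnorm (σ x α - σ y α) ≤ B * ‖x - y‖ ^ β)
    (hirr : ∃ δ > (0 : ℝ), ∃ k > (0 : ℝ), ∃ γ : ℝ, γ < 2 * β - 1 ∧
      ∀ z ∈ frontier Ω, ∃ α₀ ∈ A, sigmaT (σ z α₀) (Dd z) = 0 ∧
        ∀ x ∈ Ω ∩ Metric.ball z δ,
          k * sdist Ω x ^ γ ≤
            ⟪b x α₀, Dd x⟫_ℝ + Matrix.trace (σ x α₀ * (σ x α₀)ᵀ * D2d x))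
    (hSMP : ∀ w : EuclideanSpace ℝ (Fin n) → ℝ, UpperSemicontinuousOn w Ω →
      (∀ x ∈ Ω, ∀ pX ∈ J2plus Ω w x, Fop A b σ x pX.1 pX.2 ≤ 0) →
      (∃ x₀ ∈ Ω, ∀ x ∈ Ω, w x ≤ w x₀) → ∀ x ∈ Ω, ∀ y ∈ Ω, w x = w y)
    (u : EuclideanSpace ℝ (Fin n) → ℝ) (hu : UpperSemicontinuousOn u Ω)
    (husub : ∀ x ∈ Ω, ∀ pX ∈ J2plus Ω u x, Fop A b σ x pX.1 pX.2 ≤ 0)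
    (hgrowth : ∀ ε > (0 : ℝ), ∃ δ, 0 < δ ∧ δ < 1 ∧
      ∀ x ∈ Ω, sdist Ω x < δ → u x ≤ ε * (-Real.log (sdist Ω x))) :
    ∀ x ∈ Ω, ∀ y ∈ Ω, u x = u y :=
  statement_0_general Ω hΩo hΩbdd A b σ hbBdd hσBdd δ₀ hδ₀ Dd D2d hDd hDdnorm hD2d β B hB hreg2 hirr
    hSMP u hu husub hgrowth
end
end

section
/- Let Ω ⊂ ℝⁿ be a bounded connected open set whose signed distance function d is C² on a neighborhood of ∂Ω. Assume condition (reg2) (β-Hölder continuity of σ with β ∈ (1/2,1]) and condition (invariance). Then for every M ≥ 0 there exists δ > 0 such that for every x ∈ Ω_δ one has F[log d](x) < −M, i.e. inf_{α∈A} ( b(x,α)·Dd(x)/d(x) + tr(a(x,α)D²d(x))/d(x) − |σ(x,α)ᵀ Dd(x)|²/d(x)² ) > M. -/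
/-!
For `x ∈ Ω` near the boundary let `z ∈ ∂Ω` be a nearest point, so `d(x) = |x - z|`. Since
`σ(z,α)ᵀ Dd(z) = 0`, the `β`-Hölder bound on `σ` and the Lipschitz bound on `Dd` in a compact
collar of `∂Ω` give `|σ(x,α)ᵀ Dd(x)| ≤ E d(x)^β` uniformly in `α`. The invariance condition then
bounds the quantity inside the infimum below by `k d^(γ-1) - E² d^(2β-2)`, which tends to `+∞`
as `d → 0⁺` because `γ - 1 < 0` and `γ - 1 < 2β - 2`.
-/

open scoped InnerProductSpace Matrix
open Filter

noncomputable section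

open Metric Set Topology

lemma Bornology.IsBounded.ne_univ {E : Type*} [NormedAddCommGroup E] [NormedSpace ℝ E] {s : Set E}
    (hs : Bornology.IsBounded s) {v : E} (hv : ‖v‖ = 1) : s ≠ univ := by
  rintro rfl
  have : Nontrivial E := nontrivial_of_ne v 0 (norm_ne_zero_iff.1 (by simp [hv]))
  exact NormedSpace.unbounded_univ ℝ E hs

section SignedDistance

variable {n : ℕ}

lemma lipschitzWith_sdist (Ω : Set (EuclideanSpace ℝ (Fin n))) : LipschitzWith 2 (sdist Ω) := by
  have h := (lipschitz_infDist_pt Ωᶜ).sub (lipschitz_infDist_pt (closure Ω))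
  rw [one_add_one_eq_two] at h
  exact h

variable {Ω : Set (EuclideanSpace ℝ (Fin n))}

lemma sdist_of_mem_frontier {z : EuclideanSpace ℝ (Fin n)} (hz : z ∈ frontier Ω) :
    sdist Ω z = 0 := by
  have hzc : z ∈ closure Ωᶜ := by
    rw [← frontier_compl] at hz
    exact frontier_subset_closure hz
  simp [sdist, infDist_zero_of_mem_closure hzc,
    infDist_zero_of_mem (frontier_subset_closure hz)]

lemma abs_sdist_le_two_mul_dist {y z : EuclideanSpace ℝ (Fin n)} (hz : z ∈ frontier Ω) :
    |sdist Ω y| ≤ 2 * dist y z := by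
  simpa [sdist_of_mem_frontier hz, Real.dist_eq] using (lipschitzWith_sdist Ω).dist_le_mul y z

lemma exists_mem_frontier_dist_eq_sdist (hΩ : IsOpen Ω) (hΩu : Ω ≠ univ)
    {x : EuclideanSpace ℝ (Fin n)} (hx : x ∈ Ω) :
    ∃ z ∈ frontier Ω, dist x z = sdist Ω x ∧ 0 < dist x z := by
  obtain ⟨z, hz, hxz⟩ := exists_mem_frontier_infDist_compl_eq_dist hx hΩu
  have hzx : z ∉ Ω := fun hzΩ => (hΩ.inter_frontier_eq).subset ⟨hzΩ, hz⟩
  refine ⟨z, hz, ?_, dist_pos.2 fun h => hzx (h ▸ hx)⟩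
  simp [sdist, ← hxz, infDist_zero_of_mem (subset_closure hx)]

lemma cthickening_frontier_subset (hΩ : IsCompact (frontier Ω)) {ρ δ : ℝ} (hρ : 0 ≤ ρ)
    (hρδ : 2 * ρ < δ) : cthickening ρ (frontier Ω) ⊆ {x | |sdist Ω x| < δ} := by
  intro y hy
  rw [hΩ.cthickening_eq_biUnion_closedBall hρ, mem_iUnion₂] at hy
  obtain ⟨z, hz, hyz⟩ := hy
  have := abs_sdist_le_two_mul_dist (y := y) hz
  show |sdist Ω y| < δ
  linarith [mem_closedBall.1 hyz]

end SignedDistance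

section SigmaTranspose

variable {n r : ℕ}

lemma norm_toLp_sigmaT_le (M : Matrix (Fin n) (Fin r) ℝ) (v : EuclideanSpace ℝ (Fin n)) :
    ‖WithLp.toLp 2 (sigmaT M v)‖ ≤ mnorm M * ‖v‖ := by
  rw [EuclideanSpace.norm_eq, EuclideanSpace.norm_eq, mnorm, ← Real.sqrt_mul (by positivity)]
  refine Real.sqrt_le_sqrt ?_
  simp only [Real.norm_eq_abs, sq_abs]
  calc ∑ j, sigmaT M v j ^ 2 = ∑ j, (∑ i, M i j * v i) ^ 2 := by
        simp [sigmaT, Matrix.mulVec, dotProduct]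
    _ ≤ ∑ j, (∑ i, M i j ^ 2) * ∑ i, v i ^ 2 :=
        Finset.sum_le_sum fun j _ => Finset.sum_mul_sq_le_sq_mul_sq _ _ _
    _ = (∑ i, ∑ j, M i j ^ 2) * ∑ i, v i ^ 2 := by
        rw [← Finset.sum_mul, Finset.sum_comm]

lemma norm_toLp_sigmaT_le_of_sigmaT_eq_zero {M N : Matrix (Fin n) (Fin r) ℝ}
    {u v : EuclideanSpace ℝ (Fin n)} (hN : sigmaT N v = 0) :
    ‖WithLp.toLp 2 (sigmaT M u)‖ ≤ mnorm (M - N) * ‖u‖ + mnorm N * ‖u - v‖ := by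
  have hsplit : sigmaT M u = sigmaT (M - N) u + sigmaT N (u - v) := by
    change Mᵀ *ᵥ u.ofLp = (M - N)ᵀ *ᵥ u.ofLp + Nᵀ *ᵥ (u - v).ofLp
    rw [WithLp.ofLp_sub, Matrix.mulVec_sub, Matrix.transpose_sub, Matrix.sub_mulVec]
    change _ = _ + (_ - sigmaT N v)
    rw [hN]
    abel
  rw [hsplit, WithLp.toLp_add]
  exact (norm_add_le _ _).trans
    (add_le_add (norm_toLp_sigmaT_le _ _) (norm_toLp_sigmaT_le _ _))

lemma sum_sigmaT_sq_le_of_sigmaT_eq_zero {M N : Matrix (Fin n) (Fin r) ℝ}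
    {u v : EuclideanSpace ℝ (Fin n)} {B C L β d : ℝ} (hN : sigmaT N v = 0)
    (hMN : mnorm (M - N) ≤ B * d ^ β) (hNC : mnorm N ≤ C) (hu : ‖u‖ = 1)
    (huv : ‖u - v‖ ≤ L * d) (hL : 0 ≤ L) (hd : 0 < d) (hd1 : d ≤ 1) (hβ : β ≤ 1) :
    ∑ i, sigmaT M u i ^ 2 ≤ ((B + C * L) * d ^ β) ^ 2 := by
  have hC : 0 ≤ C := (Real.sqrt_nonneg _).trans hNC
  have hdβ : d ≤ d ^ β := by simpa using Real.rpow_le_rpow_of_exponent_ge hd hd1 hβ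
  have hnorm : ‖WithLp.toLp 2 (sigmaT M u)‖ ≤ (B + C * L) * d ^ β :=
    calc _ ≤ mnorm (M - N) * ‖u‖ + mnorm N * ‖u - v‖ :=
          norm_toLp_sigmaT_le_of_sigmaT_eq_zero hN
      _ ≤ B * d ^ β * 1 + C * (L * d) := by
          rw [hu]
          gcongr
      _ ≤ (B + C * L) * d ^ β := by nlinarith [mul_nonneg hC hL]
  rw [← EuclideanSpace.real_norm_sq_eq (WithLp.toLp 2 _)]
  exact pow_le_pow_left₀ (norm_nonneg _) hnorm 2

end SigmaTranspose

lemma exists_norm_sub_le_mul_dist_of_hasFDerivAt {E F : Type*} [NormedAddCommGroup E]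
    [NormedSpace ℝ E] [ProperSpace E] [NormedAddCommGroup F] [NormedSpace ℝ F]
    {S : Set E} (hS : IsCompact S) {ρ : ℝ} {f : E → F} {f' : E → E →L[ℝ] F}
    (hf : ∀ y ∈ cthickening ρ S, HasFDerivAt f (f' y) y)
    (hf' : ContinuousOn f' (cthickening ρ S)) :
    ∃ L, 0 ≤ L ∧ ∀ z ∈ S, ∀ x, dist x z ≤ ρ → ‖f x - f z‖ ≤ L * dist x z := by
  obtain ⟨L, hL⟩ := hS.cthickening.exists_bound_of_continuousOn hf'
  refine ⟨max L 0, le_max_right _ _, fun z hz x hxz => ?_⟩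
  have hball : closedBall z ρ ⊆ cthickening ρ S := closedBall_subset_cthickening hz ρ
  rw [dist_eq_norm]
  exact (convex_closedBall z ρ).norm_image_sub_le_of_norm_hasFDerivWithin_le
    (fun y hy => (hf y (hball hy)).hasFDerivWithinAt)
    (fun y hy => (hL y (hball hy)).trans (le_max_left _ _))
    (mem_closedBall_self (dist_nonneg.trans hxz)) hxz

lemma exists_lipschitz_bound_near_frontier {n : ℕ} {Ω : Set (EuclideanSpace ℝ (Fin n))}
    (hΩ : Bornology.IsBounded Ω) {δ₀ : ℝ} (hδ₀ : 0 < δ₀)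
    {Dd : EuclideanSpace ℝ (Fin n) → EuclideanSpace ℝ (Fin n)}
    {D2d : EuclideanSpace ℝ (Fin n) → Matrix (Fin n) (Fin n) ℝ}
    (hD2d : ∀ x, |sdist Ω x| < δ₀ →
      HasFDerivAt Dd (LinearMap.toContinuousLinearMap (Matrix.toEuclideanLin (D2d x))) x)
    (hD2dCont : ContinuousOn D2d {x | |sdist Ω x| < δ₀}) :
    ∃ L, 0 ≤ L ∧ ∀ z ∈ frontier Ω, ∀ x, dist x z ≤ δ₀ / 4 → ‖Dd x - Dd z‖ ≤ L * dist x z := by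
  have hfr : IsCompact (frontier Ω) :=
    hΩ.isCompact_closure.of_isClosed_subset isClosed_frontier frontier_subset_closure
  have hcollar := cthickening_frontier_subset hfr (by positivity : 0 ≤ δ₀ / 4)
    (by linarith : 2 * (δ₀ / 4) < δ₀)
  exact exists_norm_sub_le_mul_dist_of_hasFDerivAt hfr (fun y hy => hD2d y (hcollar hy))
    ((Matrix.toEuclideanCLM (n := Fin n) (𝕜 := ℝ)).toAlgEquiv.toLinearMap
      |>.continuous_of_finiteDimensional.comp_continuousOn (hD2dCont.mono hcollar))

lemma tendsto_mul_rpow_div_sub_sq_div_sq {k E γ β : ℝ} (hk : 0 < k) (hγ : γ < 1)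
    (hγβ : γ < 2 * β - 1) :
    Tendsto (fun d : ℝ => k * d ^ γ / d - (E * d ^ β) ^ 2 / d ^ 2) (𝓝[>] 0) atTop := by
  have hsmall : Tendsto (fun d : ℝ => k - E ^ 2 * d ^ (2 * β - 1 - γ)) (𝓝[>] 0) (𝓝 k) := by
    have h := (Real.continuousAt_rpow_const 0 (2 * β - 1 - γ) (Or.inr (by linarith))).tendsto
    rw [Real.zero_rpow (by linarith)] at h
    simpa using (tendsto_const_nhds.sub (h.const_mul (E ^ 2))).mono_left nhdsWithin_le_nhds
  refine ((tendsto_rpow_neg_nhdsGT_zero (by linarith : γ - 1 < 0)).atTop_mul_pos hk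
    hsmall).congr' ?_
  filter_upwards [self_mem_nhdsWithin] with d (hd : 0 < d)
  have hβ2 : (d ^ β) ^ 2 = d ^ (γ - 1) * d ^ (2 * β - 1 - γ) * d ^ 2 := by
    rw [← Real.rpow_add hd, ← Real.rpow_natCast, ← Real.rpow_natCast, ← Real.rpow_mul hd.le,
      ← Real.rpow_add hd]
    congr 1
    push_cast
    ring
  rw [mul_pow, hβ2, Real.rpow_sub_one hd.ne']
  field_simp

theorem statement_3_general
    {n m r : ℕ} (Ω : Set (EuclideanSpace ℝ (Fin n)))
    (hΩo : IsOpen Ω) (hΩbdd : Bornology.IsBounded Ω)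
    (A : Set (Fin m → ℝ)) (hAne : A.Nonempty)
    (b : EuclideanSpace ℝ (Fin n) → (Fin m → ℝ) → EuclideanSpace ℝ (Fin n))
    (σ : EuclideanSpace ℝ (Fin n) → (Fin m → ℝ) → Matrix (Fin n) (Fin r) ℝ)
    (hσBdd : ∃ C, ∀ x ∈ closure Ω, ∀ α ∈ A, mnorm (σ x α) ≤ C)
    (δ₀ : ℝ) (hδ₀ : 0 < δ₀)
    (Dd : EuclideanSpace ℝ (Fin n) → EuclideanSpace ℝ (Fin n))
    (D2d : EuclideanSpace ℝ (Fin n) → Matrix (Fin n) (Fin n) ℝ)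
    (hDdnorm : ∀ x, |sdist Ω x| < δ₀ → ‖Dd x‖ = 1)
    (hD2d : ∀ x, |sdist Ω x| < δ₀ →
      HasFDerivAt Dd (LinearMap.toContinuousLinearMap (Matrix.toEuclideanLin (D2d x))) x)
    (hD2dCont : ContinuousOn D2d {x | |sdist Ω x| < δ₀})
    (β B : ℝ) (hβhigh : β ≤ 1)
    (hreg2 : ∀ x ∈ closure Ω, ∀ y ∈ closure Ω, ∀ α ∈ A,
      mnorm (σ x α - σ y α) ≤ B * ‖x - y‖ ^ β)
    (hinv : ∃ δ > (0 : ℝ), ∃ k > (0 : ℝ), ∃ γ : ℝ, γ < 2 * β - 1 ∧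
      ∀ z ∈ frontier Ω, ∀ α ∈ A, sigmaT (σ z α) (Dd z) = 0 ∧
        ∀ x ∈ Ω, sdist Ω x < δ →
          k * sdist Ω x ^ γ ≤
            ⟪b x α, Dd x⟫_ℝ + Matrix.trace (σ x α * (σ x α)ᵀ * D2d x))
    :
    ∀ M : ℝ, 0 ≤ M → ∃ δ > (0 : ℝ), ∀ x ∈ Ω, sdist Ω x < δ →
      M < sInf ((fun α =>
        ⟪b x α, Dd x⟫_ℝ / sdist Ω x
          + Matrix.trace (σ x α * (σ x α)ᵀ * D2d x) / sdist Ω x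
          - (∑ i, sigmaT (σ x α) (Dd x) i ^ 2) / sdist Ω x ^ 2) '' A) := by
  intro M _
  obtain ⟨δi, hδi, k, hk, γ, hγ, hinv⟩ := hinv
  obtain ⟨C, hC⟩ := hσBdd
  obtain ⟨L, hL, hDdLip⟩ := exists_lipschitz_bound_near_frontier hΩbdd hδ₀ hD2d hD2dCont
  obtain ⟨δ, hδ, hδsub⟩ := mem_nhdsGT_iff_exists_Ioo_subset.1
    (((tendsto_mul_rpow_div_sub_sq_div_sq (E := B + C * L) hk (by linarith) hγ).eventually_gt_atTop
      (M + 1)).and (Ioo_mem_nhdsGT (lt_min hδi (lt_min (by positivity : 0 < δ₀ / 4) one_pos))))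
  refine ⟨δ, hδ, fun x hx hxδ => ?_⟩
  -- a bounded `Ω` can be the whole space only in dimension `0`, where no unit vector `Dd x` exists
  have hΩu : Ω ≠ univ := by
    rintro rfl
    exact hΩbdd.ne_univ (hDdnorm x (by simp [sdist, infDist_zero_of_mem (mem_univ x), hδ₀])) rfl
  obtain ⟨z, hz, hxz, hd⟩ := exists_mem_frontier_dist_eq_sdist hΩo hΩu hx
  set d := sdist Ω x
  rw [hxz] at hd
  obtain ⟨hMd, hdδi, hdδ₀, hd1⟩ : M + 1 < k * d ^ γ / d - ((B + C * L) * d ^ β) ^ 2 / d ^ 2 ∧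
      d < δi ∧ d < δ₀ / 4 ∧ d < 1 := by
    simpa [lt_min_iff, hd] using hδsub ⟨hd, hxδ⟩
  -- `le_csInf` only gives `≤`, hence the margin `M + 1`
  refine (lt_add_one M).trans_le (le_csInf (hAne.image _) ?_)
  rintro _ ⟨α, hα, rfl⟩
  obtain ⟨hσz, hdrift⟩ := hinv z hz α hα
  have hzcl := frontier_subset_closure hz
  have hdiff := sum_sigmaT_sq_le_of_sigmaT_eq_zero hσz
    (by simpa [← dist_eq_norm, hxz] using hreg2 x (subset_closure hx) z hzcl α hα)
    (hC z hzcl α hα) (hDdnorm x (by rw [abs_of_pos hd]; linarith))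
    (by simpa [hxz] using hDdLip z hz x (by rw [hxz]; exact hdδ₀.le)) hL hd hd1.le hβhigh
  have hdrift' : k * d ^ γ / d ≤
      ⟪b x α, Dd x⟫_ℝ / d + Matrix.trace (σ x α * (σ x α)ᵀ * D2d x) / d := by
    rw [← add_div]
    exact div_le_div_of_nonneg_right (hdrift x hx hdδi) hd.le
  have hdiff' := div_le_div_of_nonneg_right hdiff (sq_nonneg d)
  linarith

theorem statement_3
    {n m r : ℕ} (Ω : Set (EuclideanSpace ℝ (Fin n)))
    (hΩo : IsOpen Ω) (hΩconn : IsConnected Ω) (hΩbdd : Bornology.IsBounded Ω)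
    (A : Set (Fin m → ℝ)) (hA : IsClosed A) (hAne : A.Nonempty)
    (b : EuclideanSpace ℝ (Fin n) → (Fin m → ℝ) → EuclideanSpace ℝ (Fin n))
    (σ : EuclideanSpace ℝ (Fin n) → (Fin m → ℝ) → Matrix (Fin n) (Fin r) ℝ)
    (hbBdd : ∃ C, ∀ x ∈ closure Ω, ∀ α ∈ A, ‖b x α‖ ≤ C)
    (hσBdd : ∃ C, ∀ x ∈ closure Ω, ∀ α ∈ A, mnorm (σ x α) ≤ C)
    (hbCont : ContinuousOn (fun q : EuclideanSpace ℝ (Fin n) × (Fin m → ℝ) => b q.1 q.2)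
      (closure Ω ×ˢ A))
    (hσCont : ContinuousOn (fun q : EuclideanSpace ℝ (Fin n) × (Fin m → ℝ) => σ q.1 q.2)
      (closure Ω ×ˢ A))
    (δ₀ : ℝ) (hδ₀ : 0 < δ₀)
    (Dd : EuclideanSpace ℝ (Fin n) → EuclideanSpace ℝ (Fin n))
    (D2d : EuclideanSpace ℝ (Fin n) → Matrix (Fin n) (Fin n) ℝ)
    (hDd : ∀ x, |sdist Ω x| < δ₀ → HasGradientAt (sdist Ω) (Dd x) x)
    (hDdnorm : ∀ x, |sdist Ω x| < δ₀ → ‖Dd x‖ = 1)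
    (hD2d : ∀ x, |sdist Ω x| < δ₀ →
      HasFDerivAt Dd (LinearMap.toContinuousLinearMap (Matrix.toEuclideanLin (D2d x))) x)
    (hD2dCont : ContinuousOn D2d {x | |sdist Ω x| < δ₀})
    (β B : ℝ) (hβlow : 1 / 2 < β) (hβhigh : β ≤ 1) (hB : 0 < B)
    (hreg2 : ∀ x ∈ closure Ω, ∀ y ∈ closure Ω, ∀ α ∈ A,
      mnorm (σ x α - σ y α) ≤ B * ‖x - y‖ ^ β)
    (hinv : ∃ δ > (0 : ℝ), ∃ k > (0 : ℝ), ∃ γ : ℝ, γ < 2 * β - 1 ∧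
      ∀ z ∈ frontier Ω, ∀ α ∈ A, sigmaT (σ z α) (Dd z) = 0 ∧
        ∀ x ∈ Ω, sdist Ω x < δ →
          k * sdist Ω x ^ γ ≤
            ⟪b x α, Dd x⟫_ℝ + Matrix.trace (σ x α * (σ x α)ᵀ * D2d x))
    :
    ∀ M : ℝ, 0 ≤ M → ∃ δ > (0 : ℝ), ∀ x ∈ Ω, sdist Ω x < δ →
      M < sInf ((fun α =>
        ⟪b x α, Dd x⟫_ℝ / sdist Ω x
          + Matrix.trace (σ x α * (σ x α)ᵀ * D2d x) / sdist Ω x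
          - (∑ i, sigmaT (σ x α) (Dd x) i ^ 2) / sdist Ω x ^ 2) '' A) :=
  statement_3_general Ω hΩo hΩbdd A hAne b σ hσBdd δ₀ hδ₀ Dd D2d hDdnorm hD2d hD2dCont β B hβhigh
    hreg2 hinv
end
end
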